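/- Let Y be a finite type, m a pmf on Y, and X = ∏_{i=1}^N X_i a finite product of finite types. For each y with m(y) > 0, let p(·∣y) be a pmf on X whose marginals are everywhere positive, let Q_y be a log-convex set of everywhere-positive pmfs on X containing the product of the marginals of p(·∣y), and let q*(·∣y) ∈ Q_y minimize q ↦ KL(p(·∣y) ‖ q) over Q_y. Then the expected conditional total correlation decreases: ∑_{y : m(y)>0} m(y) · TC(q*(·∣y)) ≤ ∑_{y : m(y)>0} m(y) · TC(p(·∣y)). Consequently, for any function c : Y → ℝ (such as the unchanged conditional total correlation of intermediate states given the fully masked state), ∑_y m(y)·(TC(q*(·∣y)) + c(y)) ≤ ∑_y m(y)·(TC(p(·∣y)) + c(y)). -/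

import Mathlib

open Finset

/-- A probability mass function on a finite type. -/
def IsPmf {X : Type*} [Fintype X] (p : X → ℝ) : Prop :=
  (∀ x, 0 ≤ p x) ∧ ∑ x, p x = 1

/-- Kullback–Leibler divergence between pmfs on a finite type. -/
noncomputable def KL {X : Type*} [Fintype X] (p q : X → ℝ) : ℝ :=
  ∑ x, if 0 < p x then p x * Real.log (p x / q x) else 0

/-- A set of pmfs is log-convex if it is closed under normalized geometric mixtures. -/
def LogConvexSet {X : Type*} [Fintype X] (Q : Set (X → ℝ)) : Prop :=
  ∀ q₀ ∈ Q, ∀ q₁ ∈ Q, ∀ lam : ℝ, 0 ≤ lam → lam ≤ 1 →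
    (fun x => q₀ x ^ (1 - lam) * q₁ x ^ lam /
      ∑ x', q₀ x' ^ (1 - lam) * q₁ x' ^ lam) ∈ Q

/-- The `i`-th marginal of a pmf on a finite product. -/
noncomputable def marginal {N : ℕ} {X : Fin N → Type*}
    [∀ i, Fintype (X i)] [∀ i, DecidableEq (X i)]
    (p : (∀ i, X i) → ℝ) (i : Fin N) (a : X i) : ℝ :=
  ∑ x, if x i = a then p x else 0

/-- The total correlation of a pmf on a finite product: `TC(p) = KL(p ‖ ⊗_i p_i)`. -/
noncomputable def totalCorr {N : ℕ} {X : Fin N → Type*}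
    [∀ i, Fintype (X i)] [∀ i, DecidableEq (X i)]
    (p : (∀ i, X i) → ℝ) : ℝ :=
  KL p (fun x => ∏ i, marginal p i (x i))

section Aux
variable {Z : Type*} [Fintype Z]

lemma pmf_nonempty {p : Z → ℝ} (hp : IsPmf p) : Nonempty Z := by
  by_contra h
  have : ∑ x, p x = 0 := by
    rw [Finset.sum_eq_zero]; intro x _; exact absurd ⟨x⟩ h
  rw [hp.2] at this; norm_num at this

lemma KL_nonneg {p q : Z → ℝ} (hp : IsPmf p) (hq : IsPmf q)
    (hqpos : ∀ x, 0 < p x → 0 < q x) : 0 ≤ KL p q := by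
  have key : ∀ x : Z, (if 0 < p x then p x - q x else 0)
      ≤ (if 0 < p x then p x * Real.log (p x / q x) else 0) := by
    intro x
    by_cases h : 0 < p x
    · simp only [if_pos h]
      have hq' := hqpos x h
      have h2 : Real.log (q x / p x) ≤ q x / p x - 1 :=
        Real.log_le_sub_one_of_pos (div_pos hq' h)
      have h1 : Real.log (p x / q x) = - Real.log (q x / p x) := by
        rw [← Real.log_inv, inv_div]
      have h3 : q x / p x * p x = q x := div_mul_cancel₀ _ (ne_of_gt h)
      nlinarith
    · simp [h]
  have hsum : ∑ x, (if 0 < p x then p x - q x else 0) ≤ KL p q :=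
    Finset.sum_le_sum fun x _ => key x
  have hA : ∑ x, (if 0 < p x then p x else 0) = 1 := by
    rw [← hp.2]
    apply Finset.sum_congr rfl
    intro x _
    by_cases h : 0 < p x
    · simp [h]
    · simp [h, le_antisymm (not_lt.1 h) (hp.1 x)]
  have hB : ∑ x, (if 0 < p x then q x else 0) ≤ 1 := by
    rw [← hq.2]
    apply Finset.sum_le_sum
    intro x _
    split
    · exact le_rfl
    · exact hq.1 x
  have : ∑ x, (if 0 < p x then p x - q x else 0)
      = (∑ x, (if 0 < p x then p x else 0)) - ∑ x, (if 0 < p x then q x else 0) := by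
    rw [← Finset.sum_sub_distrib]
    apply Finset.sum_congr rfl
    intro x _
    split <;> simp
  linarith

/-- Pythagorean-type inequality for the reverse I-projection onto a log-convex set. -/
lemma kl_pythagorean {p q0 q1 : Z → ℝ} (hp : IsPmf p) (hq0 : IsPmf q0) (hq1 : IsPmf q1)
    (hq0pos : ∀ x, 0 < q0 x) (hq1pos : ∀ x, 0 < q1 x)
    (hmin : ∀ lam : ℝ, 0 < lam → lam ≤ 1 →
      KL p q0 ≤ KL p (fun x => q0 x ^ (1 - lam) * q1 x ^ lam /
        ∑ x', q0 x' ^ (1 - lam) * q1 x' ^ lam)) :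
    KL p q0 + KL q0 q1 ≤ KL p q1 := by
  haveI : Nonempty Z := pmf_nonempty hp
  set A : ℝ := ∑ x, (if 0 < p x then p x * Real.log (q1 x / q0 x) else 0) with hA
  set S : ℝ → ℝ := fun lam => ∑ x, q0 x ^ (1 - lam) * q1 x ^ lam with hS
  -- rewrite the summand of S
  have hterm : ∀ (lam : ℝ) (x : Z), q0 x ^ (1 - lam) * q1 x ^ lam
      = q0 x * (q1 x / q0 x) ^ lam := by
    intro lam x
    rw [Real.div_rpow (le_of_lt (hq1pos x)) (le_of_lt (hq0pos x)),
      Real.rpow_sub (hq0pos x), Real.rpow_one]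
    field_simp
  have hSpos : ∀ lam, 0 < S lam := by
    intro lam
    apply Finset.sum_pos
    · intro x _
      exact mul_pos (Real.rpow_pos_of_pos (hq0pos x) _) (Real.rpow_pos_of_pos (hq1pos x) _)
    · exact univ_nonempty
  have hS0 : S 0 = 1 := by
    simp only [hS, sub_zero, Real.rpow_one, Real.rpow_zero, mul_one]
    exact hq0.2
  -- Step 1: KL p q1 - KL p q0 = -A
  have hstep1 : KL p q1 = KL p q0 - A := by
    simp only [KL, hA, ← Finset.sum_sub_distrib]
    apply Finset.sum_congr rfl
    intro x _
    by_cases h : 0 < p x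
    · simp only [if_pos h]
      rw [Real.log_div (ne_of_gt h) (ne_of_gt (hq1pos x)),
        Real.log_div (ne_of_gt h) (ne_of_gt (hq0pos x)),
        Real.log_div (ne_of_gt (hq1pos x)) (ne_of_gt (hq0pos x))]
      ring
    · simp [h]
  -- sum of p over positive part is 1
  have hpsum : ∑ x, (if 0 < p x then p x else 0) = 1 := by
    rw [← hp.2]
    apply Finset.sum_congr rfl
    intro x _
    by_cases h : 0 < p x
    · simp [h]
    · simp [h, le_antisymm (not_lt.1 h) (hp.1 x)]
  -- Step 2: for lam ∈ (0,1], lam * A ≤ S lam - 1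
  have hstep2 : ∀ lam : ℝ, 0 < lam → lam ≤ 1 → lam * A ≤ S lam - 1 := by
    intro lam hl0 hl1
    have hmin' := hmin lam hl0 hl1
    have hcalc : KL p (fun x => q0 x ^ (1 - lam) * q1 x ^ lam / S lam)
        = KL p q0 - lam * A + Real.log (S lam) := by
      simp only [KL, hA, Finset.mul_sum, ← Finset.sum_sub_distrib]
      have : Real.log (S lam) = ∑ x, (if 0 < p x then p x * Real.log (S lam) else 0) := by
        have : ∑ x, (if 0 < p x then p x * Real.log (S lam) else 0)
            = (∑ x, (if 0 < p x then p x else 0)) * Real.log (S lam) := by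
          rw [Finset.sum_mul]
          apply Finset.sum_congr rfl
          intro x _
          split <;> simp
        rw [this, hpsum, one_mul]
      rw [this, ← Finset.sum_add_distrib]
      apply Finset.sum_congr rfl
      intro x _
      by_cases h : 0 < p x
      · simp only [if_pos h]
        have e1 : q0 x ^ (1 - lam) * q1 x ^ lam = q0 x * (q1 x / q0 x) ^ lam := hterm lam x
        rw [Real.log_div (ne_of_gt h)
            (ne_of_gt (div_pos (mul_pos (Real.rpow_pos_of_pos (hq0pos x) _)
              (Real.rpow_pos_of_pos (hq1pos x) _)) (hSpos lam))),
          Real.log_div (ne_of_gt h) (ne_of_gt (hq0pos x)),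
          Real.log_div (mul_pos (Real.rpow_pos_of_pos (hq0pos x) _)
              (Real.rpow_pos_of_pos (hq1pos x) _)).ne' (hSpos lam).ne',
          e1, Real.log_mul (hq0pos x).ne' (Real.rpow_pos_of_pos
            (div_pos (hq1pos x) (hq0pos x)) _).ne',
          Real.log_rpow (div_pos (hq1pos x) (hq0pos x))]
        ring
      · simp [h]
    rw [hcalc] at hmin'
    have hlog : Real.log (S lam) ≤ S lam - 1 := Real.log_le_sub_one_of_pos (hSpos lam)
    linarith
  -- Step 3: derivative of S at 0
  set D : ℝ := ∑ x, q0 x * Real.log (q1 x / q0 x) with hD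
  have hderiv : HasDerivAt S D 0 := by
    have hder : ∀ x : Z, HasDerivAt (fun lam : ℝ => q0 x * (q1 x / q0 x) ^ lam)
        (q0 x * Real.log (q1 x / q0 x)) 0 := by
      intro x
      have h1 : HasDerivAt (fun lam : ℝ => (q1 x / q0 x) ^ lam)
          ((q1 x / q0 x) ^ (0:ℝ) * Real.log (q1 x / q0 x)) 0 :=
        (Real.hasStrictDerivAt_const_rpow (div_pos (hq1pos x) (hq0pos x)) 0).hasDerivAt
      have h2 := h1.const_mul (q0 x)
      simpa [Real.rpow_zero, mul_assoc] using h2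
    have hsum := HasDerivAt.fun_sum (fun x (_ : x ∈ (univ : Finset Z)) => hder x)
    rw [hD]
    have e : S = fun lam => ∑ x ∈ univ, q0 x * (q1 x / q0 x) ^ lam :=
      funext fun lam => Finset.sum_congr rfl fun x _ => hterm lam x
    rw [e]; exact hsum
  -- Step 4: A ≤ D
  have hAD : A ≤ D := by
    have hslope : Filter.Tendsto (slope S 0) (nhdsWithin 0 (Set.Ioi 0)) (nhds D) :=
      (hasDerivAt_iff_tendsto_slope.1 hderiv).mono_left
        (nhdsWithin_mono 0 (fun x hx => ne_of_gt hx))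
    apply ge_of_tendsto hslope
    filter_upwards [Ioc_mem_nhdsGT_of_mem (by constructor <;> norm_num :
      (0:ℝ) ∈ Set.Ico (0:ℝ) 1)] with lam hlam
    have h2 := hstep2 lam hlam.1 hlam.2
    rw [slope_def_field, hS0, sub_zero, le_div_iff₀ hlam.1]
    linarith
  -- Step 5: D = -KL q0 q1 and conclude
  have hKL01 : KL q0 q1 = -D := by
    have hterm5 : ∀ x : Z, (if 0 < q0 x then q0 x * Real.log (q0 x / q1 x) else 0)
        = -(q0 x * Real.log (q1 x / q0 x)) := by
      intro x
      rw [if_pos (hq0pos x), show q0 x / q1 x = (q1 x / q0 x)⁻¹ from (inv_div _ _).symm,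
        Real.log_inv]
      ring
    simp only [KL, hterm5, hD, Finset.sum_neg_distrib]
  linarith

end Aux

section Prod
variable {N : ℕ} {X : Fin N → Type*} [∀ i, Fintype (X i)] [∀ i, DecidableEq (X i)]

lemma marginal_isPmf {p : (∀ i, X i) → ℝ} (hp : IsPmf p) (i : Fin N) :
    IsPmf (marginal p i) := by
  constructor
  · intro a
    apply Finset.sum_nonneg
    intro x _
    split
    · exact hp.1 x
    · exact le_rfl
  · rw [show ∑ a, marginal p i a = ∑ a, ∑ x, if x i = a then p x else 0 from rfl,
      Finset.sum_comm, ← hp.2]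
    apply Finset.sum_congr rfl
    intro x _
    simp

lemma marginal_pos {p : (∀ i, X i) → ℝ} (hpos : ∀ x, 0 < p x) (i : Fin N) (a : X i)
    [Nonempty (∀ i, X i)] : 0 < marginal p i a := by
  obtain ⟨x0⟩ := (inferInstance : Nonempty (∀ i, X i))
  apply Finset.sum_pos'
  · intro x _
    split
    · exact le_of_lt (hpos x)
    · exact le_rfl
  · refine ⟨Function.update x0 i a, Finset.mem_univ _, ?_⟩
    rw [if_pos (Function.update_self i a x0)]
    exact hpos _

lemma sum_mul_marginal {p : (∀ i, X i) → ℝ} (i : Fin N) (f : X i → ℝ) :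
    ∑ a, marginal p i a * f a = ∑ x, p x * f (x i) := by
  unfold marginal
  simp_rw [Finset.sum_mul, ite_mul, zero_mul]
  rw [Finset.sum_comm]
  apply Finset.sum_congr rfl
  intro x _
  simp

lemma totalCorr_le_KL_prod {r : (∀ i, X i) → ℝ} (hr : IsPmf r) (hrpos : ∀ x, 0 < r x)
    (s : ∀ i, X i → ℝ) (hs : ∀ i, IsPmf (s i)) (hspos : ∀ i a, 0 < s i a) :
    totalCorr r ≤ KL r (fun x => ∏ i, s i (x i)) := by
  haveI : Nonempty (∀ i, X i) := pmf_nonempty hr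
  have hmarg_pos : ∀ (i : Fin N) (a : X i), 0 < marginal r i a :=
    fun i a => marginal_pos hrpos i a
  have key : KL r (fun x => ∏ i, s i (x i)) - totalCorr r
      = ∑ i, KL (marginal r i) (s i) := by
    have lhs_eq : KL r (fun x => ∏ i, s i (x i)) - totalCorr r
        = ∑ x, r x * ∑ i, (Real.log (marginal r i (x i)) - Real.log (s i (x i))) := by
      simp only [KL, totalCorr, ← Finset.sum_sub_distrib]
      apply Finset.sum_congr rfl
      intro x _
      rw [if_pos (hrpos x), if_pos (hrpos x),
        Real.log_div (hrpos x).ne' (Finset.prod_pos fun i _ => hspos i (x i)).ne',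
        Real.log_div (hrpos x).ne' (Finset.prod_pos fun i _ => hmarg_pos i (x i)).ne',
        Real.log_prod (fun i _ => (hspos i (x i)).ne'),
        Real.log_prod (fun i _ => (hmarg_pos i (x i)).ne'),
        Finset.sum_sub_distrib]
      ring
    rw [lhs_eq, show (∑ x, r x * ∑ i, (Real.log (marginal r i (x i)) - Real.log (s i (x i))))
        = ∑ x, ∑ i, r x * (Real.log (marginal r i (x i)) - Real.log (s i (x i))) from
      Finset.sum_congr rfl fun x _ => Finset.mul_sum _ _ _,
      Finset.sum_comm]
    apply Finset.sum_congr rfl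
    intro i _
    rw [← sum_mul_marginal i (fun a => Real.log (marginal r i a) - Real.log (s i a)), KL]
    apply Finset.sum_congr rfl
    intro a _
    rw [if_pos (hmarg_pos i a), Real.log_div (hmarg_pos i a).ne' (hspos i a).ne']
  have hnn : 0 ≤ ∑ i, KL (marginal r i) (s i) :=
    Finset.sum_nonneg fun i _ => KL_nonneg (marginal_isPmf hr i) (hs i)
      (fun a _ => hspos i a)
  linarith

end Prod

/-- Conditional version: if for each `y` with `m(y) > 0` the conditional `q*(·∣y)` is
the reverse I-projection of `p(·∣y)` onto a log-convex set `Q_y` containing the product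
of the marginals of `p(·∣y)`, then the expected conditional total correlation decreases,
and the same holds after adding any `y`-dependent constant `c(y)`. -/
theorem expected_conditional_tc_decreases {Y : Type*} [Fintype Y]
    {N : ℕ} {X : Fin N → Type*}
    [∀ i, Fintype (X i)] [∀ i, DecidableEq (X i)]
    (m : Y → ℝ) (hm : IsPmf m)
    (p qstar : Y → (∀ i, X i) → ℝ)
    (Q : Y → Set ((∀ i, X i) → ℝ))
    (hp : ∀ y, 0 < m y → IsPmf (p y))
    (hppos : ∀ y, 0 < m y → ∀ i a, 0 < marginal (p y) i a)
    (hQ : ∀ y, 0 < m y → ∀ q ∈ Q y, IsPmf q ∧ ∀ x, 0 < q x)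
    (hlc : ∀ y, 0 < m y → LogConvexSet (Q y))
    (hprod : ∀ y, 0 < m y → (fun x => ∏ i, marginal (p y) i (x i)) ∈ Q y)
    (hqmem : ∀ y, 0 < m y → qstar y ∈ Q y)
    (hmin : ∀ y, 0 < m y → ∀ q ∈ Q y, KL (p y) (qstar y) ≤ KL (p y) q) :
    ((∑ y, if 0 < m y then m y * totalCorr (qstar y) else 0)
      ≤ ∑ y, if 0 < m y then m y * totalCorr (p y) else 0)
    ∧ ∀ c : Y → ℝ,
      (∑ y, if 0 < m y then m y * (totalCorr (qstar y) + c y) else 0)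
        ≤ ∑ y, if 0 < m y then m y * (totalCorr (p y) + c y) else 0 := by
  have main : ∀ y, 0 < m y → totalCorr (qstar y) ≤ totalCorr (p y) := by
    intro y hy
    have hpy := hp y hy
    haveI : Nonempty (∀ i, X i) := pmf_nonempty hpy
    obtain ⟨hqs_pmf, hqs_pos⟩ := hQ y hy _ (hqmem y hy)
    obtain ⟨hpr_pmf, hpr_pos⟩ := hQ y hy _ (hprod y hy)
    have hpyth : KL (p y) (qstar y) + KL (qstar y) (fun x => ∏ i, marginal (p y) i (x i))
        ≤ KL (p y) (fun x => ∏ i, marginal (p y) i (x i)) := by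
      apply kl_pythagorean hpy hqs_pmf hpr_pmf hqs_pos hpr_pos
      intro lam hl0 hl1
      exact hmin y hy _ (hlc y hy _ (hqmem y hy) _ (hprod y hy) lam (le_of_lt hl0) hl1)
    have h1 : 0 ≤ KL (p y) (qstar y) := KL_nonneg hpy hqs_pmf (fun x _ => hqs_pos x)
    have h2 : totalCorr (qstar y) ≤ KL (qstar y) (fun x => ∏ i, marginal (p y) i (x i)) :=
      totalCorr_le_KL_prod hqs_pmf hqs_pos _ (fun i => marginal_isPmf hpy i) (hppos y hy)
    have h3 : KL (p y) (fun x => ∏ i, marginal (p y) i (x i)) = totalCorr (p y) := rfl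
    linarith
  constructor
  · apply Finset.sum_le_sum
    intro y _
    by_cases h : 0 < m y
    · simp only [if_pos h]
      exact mul_le_mul_of_nonneg_left (main y h) (le_of_lt h)
    · simp [h]
  · intro c
    apply Finset.sum_le_sum
    intro y _
    by_cases h : 0 < m y
    · simp only [if_pos h]
      exact mul_le_mul_of_nonneg_left (add_le_add_left (main y h) (c y)) (le_of_lt h)
    · simp [h]
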